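/- Let ℓ ≥ 1, L ≥ ℓ+1, N ≥ 2L+ℓ, let u^(N) be the unique nonnegative solution of the truncated system with bounded large initial data on [0,T₁] where T₁ = ℓ/(2(ℓ+1)), and let (A_n) be the Catalan-like sequence associated with L and ℓ. Then for every i ≥ 2L+ℓ and every t ∈ (0,T₁], one has u_i^(N)(t) ≤ (A_i/i) · t^{(i−ℓ)/(2L) − 1}. -/

import Mathlib

open Finset Filter Topology

noncomputable section

/-- Total reaction probability mass for the truncated system:
`M^(N)(t) = ∑_{j=ℓ+1}^{N−1} ∑_{k=ℓ+1}^{N−j+ℓ} j k u_j(t) u_k(t)`. -/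
def MNfun (ℓ N : ℕ) (u : ℕ → ℝ → ℝ) (t : ℝ) : ℝ :=
  ∑ j ∈ Finset.Icc (ℓ + 1) (N - 1), ∑ k ∈ Finset.Icc (ℓ + 1) (N - j + ℓ),
    (j : ℝ) * (k : ℝ) * u j t * u k t

/-- Right-hand side of the truncated system for `u n` (`ℓ+1 ≤ n ≤ N`). -/
def truncRHS (ℓ N : ℕ) (u : ℕ → ℝ → ℝ) (n : ℕ) (t : ℝ) : ℝ :=
  if n = ℓ + 1 then
    -(2 * ((ℓ : ℝ) + 1) * u (ℓ + 1) t / MNfun ℓ N u t) *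
      ∑ k ∈ Finset.Icc (ℓ + 1) (N - 1), (k : ℝ) * u k t
  else if n = N then
    (1 / MNfun ℓ N u t) *
      ∑ k ∈ Finset.Icc (ℓ + 1) (N - 1),
        (k : ℝ) * ((N - k + ℓ : ℕ) : ℝ) * u k t * u (N - k + ℓ) t
  else
    (1 / MNfun ℓ N u t) *
      ((∑ k ∈ Finset.Icc (ℓ + 1) (n - 1),
          (k : ℝ) * ((n - k + ℓ : ℕ) : ℝ) * u k t * u (n - k + ℓ) t)
        - 2 * (n : ℝ) * u n t *
            ∑ k ∈ Finset.Icc (ℓ + 1) (N - n + ℓ), (k : ℝ) * u k t)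

/-- `u` is a (C¹) solution of the truncated system on `[0,T]` with
initial data `u0`. -/
structure IsTruncSolution (ℓ N : ℕ) (T : ℝ) (u0 : ℕ → ℝ) (u : ℕ → ℝ → ℝ) :
    Prop where
  contDiff : ∀ n ∈ Finset.Icc (ℓ + 1) N, ContDiffOn ℝ 1 (u n) (Set.Icc 0 T)
  init : ∀ n ∈ Finset.Icc (ℓ + 1) N, u n 0 = u0 n
  ode : ∀ n ∈ Finset.Icc (ℓ + 1) N, ∀ t ∈ Set.Icc (0 : ℝ) T,
    HasDerivWithinAt (u n) (truncRHS ℓ N u n t) (Set.Icc 0 T) t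

/-!
The gain terms of the truncated system sum to `M`, the loss terms to `2M`, so the total mass
`∑ u_n` decreases at rate exactly one (while `M > 0`) and the mass above size `L` grows at rate at
most one. On `[0, T₁]` this leaves mass at least `1 - 2t ≥ 1/(ℓ+1)` on the sizes `ℓ+1, …, L`, so
their first moment is at least `1` and `M`, which dominates its square, is at least `1`.
Discarding the loss term, `u̇_{n+1} ≤ ∑ k j u_k u_j` over `k + j = n + 1 + ℓ`, and the monomial
bounds for smaller sizes turn the right-hand side into the derivative of `A_{n+1}/(n+1) · t^p`,
`p = (n+1-ℓ)/(2L) - 1`; comparison then propagates the bound. For `i ≤ 2L+ℓ` it is just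
`u_i ≤ 1 ≤ t^((i-ℓ)/(2L)-1)`.
-/

open Set

def truncGain (ℓ : ℕ) (u : ℕ → ℝ → ℝ) (n : ℕ) (t : ℝ) : ℝ :=
  ∑ k ∈ Finset.Icc (ℓ + 1) (n - 1),
    (k : ℝ) * ((n - k + ℓ : ℕ) : ℝ) * u k t * u (n - k + ℓ) t

def truncLoss (ℓ N : ℕ) (u : ℕ → ℝ → ℝ) (n : ℕ) (t : ℝ) : ℝ :=
  2 * (n : ℝ) * u n t * ∑ k ∈ Finset.Icc (ℓ + 1) (N - n + ℓ), (k : ℝ) * u k t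

section Algebra

variable {ℓ N : ℕ} {u : ℕ → ℝ → ℝ} {t : ℝ}

theorem truncRHS_eq_gain_sub_loss {n : ℕ} (hn : n ∈ Finset.Icc (ℓ + 1) N) :
    truncRHS ℓ N u n t = (truncGain ℓ u n t - truncLoss ℓ N u n t) / MNfun ℓ N u t := by
  rw [Finset.mem_Icc] at hn
  have hempty : Finset.Icc (ℓ + 1) ℓ = ∅ := Finset.Icc_eq_empty (by omega)
  unfold truncRHS truncGain truncLoss
  split_ifs with h₁ h₂
  · subst h₁
    rw [Nat.add_sub_cancel, hempty, Finset.sum_empty, show N - (ℓ + 1) + ℓ = N - 1 by omega]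
    push_cast
    ring
  · subst h₂
    rw [Nat.sub_self, zero_add, hempty, Finset.sum_empty]
    ring
  · ring

theorem sum_truncGain :
    ∑ n ∈ Finset.Icc (ℓ + 1) N, truncGain ℓ u n t = MNfun ℓ N u t := by
  unfold truncGain MNfun
  rw [Finset.sum_sigma', Finset.sum_sigma']
  refine Finset.sum_bij' (fun p _ => (⟨p.2, p.1 - p.2 + ℓ⟩ : Σ _ : ℕ, ℕ))
    (fun p _ => (⟨p.1 + p.2 - ℓ, p.1⟩ : Σ _ : ℕ, ℕ)) ?_ ?_ ?_ ?_ (fun _ _ => rfl)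
  · rintro ⟨n, k⟩ hp
    simp only [Finset.mem_sigma, Finset.mem_Icc] at hp ⊢
    omega
  · rintro ⟨j, k⟩ hp
    simp only [Finset.mem_sigma, Finset.mem_Icc] at hp ⊢
    omega
  · rintro ⟨n, k⟩ hp
    simp only [Finset.mem_sigma, Finset.mem_Icc] at hp
    simp only [Sigma.mk.injEq, heq_eq_eq, and_true]
    omega
  · rintro ⟨j, k⟩ hp
    simp only [Finset.mem_sigma, Finset.mem_Icc] at hp
    simp only [Sigma.mk.injEq, heq_eq_eq, true_and]
    omega

theorem sum_truncLoss (hN : ℓ + 1 ≤ N) :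
    ∑ n ∈ Finset.Icc (ℓ + 1) N, truncLoss ℓ N u n t = 2 * MNfun ℓ N u t := by
  obtain ⟨N, rfl⟩ : ∃ N', N = N' + 1 := ⟨N - 1, by omega⟩
  have hlast : truncLoss ℓ (N + 1) u (N + 1) t = 0 := by
    unfold truncLoss
    rw [Nat.sub_self, zero_add, Finset.Icc_eq_empty (by omega), Finset.sum_empty, mul_zero]
  rw [Finset.sum_Icc_succ_top (by omega), hlast, add_zero, MNfun, Nat.add_sub_cancel,
    Finset.mul_sum]
  refine Finset.sum_congr rfl fun j _ => ?_
  rw [truncLoss, Finset.mul_sum, Finset.mul_sum]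
  exact Finset.sum_congr rfl fun k _ => by ring

/-- The sum is `-1` while `M ≠ 0`, and `0` when `M = 0` since `x / 0 = 0`. -/
theorem sum_truncRHS (hN : ℓ + 1 ≤ N) :
    ∑ n ∈ Finset.Icc (ℓ + 1) N, truncRHS ℓ N u n t = -(MNfun ℓ N u t / MNfun ℓ N u t) := by
  rw [Finset.sum_congr rfl fun n hn => truncRHS_eq_gain_sub_loss hn, ← Finset.sum_div,
    Finset.sum_sub_distrib, sum_truncGain, sum_truncLoss hN]
  ring

theorem MNfun_nonneg (hu : ∀ k ∈ Finset.Icc (ℓ + 1) N, 0 ≤ u k t) : 0 ≤ MNfun ℓ N u t :=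
  Finset.sum_nonneg fun j hj => Finset.sum_nonneg fun k hk => by
    simp only [Finset.mem_Icc] at hj hk
    have := hu j (Finset.mem_Icc.2 ⟨hj.1, by omega⟩)
    have := hu k (Finset.mem_Icc.2 ⟨hk.1, by omega⟩)
    positivity

theorem truncGain_nonneg (hu : ∀ k ∈ Finset.Icc (ℓ + 1) N, 0 ≤ u k t)
    {n : ℕ} (hn : n ≤ N) : 0 ≤ truncGain ℓ u n t :=
  Finset.sum_nonneg fun k hk => by
    simp only [Finset.mem_Icc] at hk
    have := hu k (Finset.mem_Icc.2 ⟨hk.1, by omega⟩)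
    have := hu (n - k + ℓ) (Finset.mem_Icc.2 ⟨by omega, by omega⟩)
    positivity

theorem truncLoss_nonneg (hu : ∀ k ∈ Finset.Icc (ℓ + 1) N, 0 ≤ u k t)
    {n : ℕ} (hn : n ∈ Finset.Icc (ℓ + 1) N) : 0 ≤ truncLoss ℓ N u n t := by
  have := hu n hn
  refine mul_nonneg (by positivity) (Finset.sum_nonneg fun k hk => ?_)
  simp only [Finset.mem_Icc] at hk hn
  have := hu k (Finset.mem_Icc.2 ⟨hk.1, by omega⟩)
  positivity

theorem truncRHS_le_truncGain_div (hu : ∀ k ∈ Finset.Icc (ℓ + 1) N, 0 ≤ u k t)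
    {n : ℕ} (hn : n ∈ Finset.Icc (ℓ + 1) N) :
    truncRHS ℓ N u n t ≤ truncGain ℓ u n t / MNfun ℓ N u t := by
  rw [truncRHS_eq_gain_sub_loss hn]
  exact div_le_div_of_nonneg_right (sub_le_self _ (truncLoss_nonneg hu hn)) (MNfun_nonneg hu)

theorem sum_truncRHS_le_one (hu : ∀ k ∈ Finset.Icc (ℓ + 1) N, 0 ≤ u k t)
    {S : Finset ℕ} (hS : S ⊆ Finset.Icc (ℓ + 1) N) :
    ∑ n ∈ S, truncRHS ℓ N u n t ≤ 1 :=
  calc ∑ n ∈ S, truncRHS ℓ N u n t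
      ≤ ∑ n ∈ S, truncGain ℓ u n t / MNfun ℓ N u t :=
        Finset.sum_le_sum fun n hn => truncRHS_le_truncGain_div hu (hS hn)
    _ ≤ (∑ n ∈ Finset.Icc (ℓ + 1) N, truncGain ℓ u n t) / MNfun ℓ N u t := by
        rw [← Finset.sum_div]
        refine div_le_div_of_nonneg_right (Finset.sum_le_sum_of_subset_of_nonneg hS
          fun n hn _ => truncGain_nonneg hu (Finset.mem_Icc.1 hn).2) (MNfun_nonneg hu)
    _ ≤ 1 := by rw [sum_truncGain]; exact div_self_le_one _

theorem sq_sum_le_MNfun (hu : ∀ k ∈ Finset.Icc (ℓ + 1) N, 0 ≤ u k t)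
    {L : ℕ} (hLN : L < N) (hLN' : 2 * L ≤ N + ℓ) :
    (∑ k ∈ Finset.Icc (ℓ + 1) L, (k : ℝ) * u k t) ^ 2 ≤ MNfun ℓ N u t := by
  have hterm : ∀ j ∈ Finset.Icc (ℓ + 1) (N - 1), ∀ k ∈ Finset.Icc (ℓ + 1) (N - j + ℓ),
      0 ≤ (j : ℝ) * k * u j t * u k t := fun j hj k hk => by
    simp only [Finset.mem_Icc] at hj hk
    have := hu j (Finset.mem_Icc.2 ⟨hj.1, by omega⟩)
    have := hu k (Finset.mem_Icc.2 ⟨hk.1, by omega⟩)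
    positivity
  rw [sq, Finset.sum_mul_sum, MNfun]
  calc ∑ j ∈ Finset.Icc (ℓ + 1) L, ∑ k ∈ Finset.Icc (ℓ + 1) L, (j : ℝ) * u j t * (k * u k t)
      = ∑ j ∈ Finset.Icc (ℓ + 1) L, ∑ k ∈ Finset.Icc (ℓ + 1) L, (j : ℝ) * k * u j t * u k t :=
        Finset.sum_congr rfl fun _ _ => Finset.sum_congr rfl fun _ _ => by ring
    _ ≤ ∑ j ∈ Finset.Icc (ℓ + 1) L, ∑ k ∈ Finset.Icc (ℓ + 1) (N - j + ℓ),
          (j : ℝ) * k * u j t * u k t := by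
        refine Finset.sum_le_sum fun j hj => ?_
        have hj' := Finset.mem_Icc.1 hj
        exact Finset.sum_le_sum_of_subset_of_nonneg (Finset.Icc_subset_Icc_right (by omega))
          fun k hk _ => hterm j (Finset.mem_Icc.2 ⟨hj'.1, by omega⟩) k hk
    _ ≤ _ := Finset.sum_le_sum_of_subset_of_nonneg (Finset.Icc_subset_Icc_right (by omega))
          fun j hj _ => Finset.sum_nonneg (hterm j hj)

end Algebra

section Catalan

variable {ℓ L : ℕ} {A : ℕ → ℝ}

theorem catalan_nonneg (hA₁ : ∀ k : ℕ, ℓ + 1 ≤ k → k ≤ 2 * L + ℓ → A k = k)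
    (hA₂ : ∀ n : ℕ, 2 * L + ℓ ≤ n →
      A (n + 1) = ((n : ℝ) + 1) * (2 * (L : ℝ) / ((n : ℝ) + 1 - ℓ - 2 * L)) *
        ∑ k ∈ Finset.Icc (ℓ + 1) n, A k * A (n - k + ℓ + 1)) :
    ∀ m, ℓ + 1 ≤ m → 0 ≤ A m := by
  intro m
  induction m using Nat.strong_induction_on with
  | _ m ih =>
    intro hm
    by_cases hbase : m ≤ 2 * L + ℓ
    · rw [hA₁ m hm hbase]
      positivity
    obtain ⟨n, rfl⟩ : ∃ n, m = n + 1 := ⟨m - 1, by omega⟩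
    have hn : (2 * L + ℓ : ℝ) ≤ n := by exact_mod_cast (by omega : 2 * L + ℓ ≤ n)
    rw [hA₂ n (by omega)]
    refine mul_nonneg (mul_nonneg (by positivity) (div_nonneg (by positivity) (by linarith)))
      (Finset.sum_nonneg fun k hk => ?_)
    have hk := Finset.mem_Icc.1 hk
    exact mul_nonneg (ih k (by omega) hk.1) (ih _ (by omega) (by omega))

/-- The recursion for `A` says exactly that `A_{n+1}/(n+1) · t^p`, with `p` the exponent of the
monomial bound for `u_{n+1}`, has derivative `(∑ A_k A_{n-k+ℓ+1}) · t^(p-1)`. -/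
theorem catalan_div_mul_exponent (hL : 0 < L) {n : ℕ} (hn : 2 * L + ℓ ≤ n)
    (hA : A (n + 1) = ((n : ℝ) + 1) * (2 * (L : ℝ) / ((n : ℝ) + 1 - ℓ - 2 * L)) *
        ∑ k ∈ Finset.Icc (ℓ + 1) n, A k * A (n - k + ℓ + 1)) :
    A (n + 1) / ((n + 1 : ℕ) : ℝ) * ((((n + 1 : ℕ) : ℝ) - ℓ) / (2 * L) - 1)
      = ∑ k ∈ Finset.Icc (ℓ + 1) n, A k * A (n - k + ℓ + 1) := by
  have hn' : (2 * L + ℓ : ℝ) ≤ n := by exact_mod_cast hn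
  have hd : (n : ℝ) + 1 - ℓ - 2 * L ≠ 0 := by linarith
  have hL' : (L : ℝ) ≠ 0 := by positivity
  rw [hA]
  push_cast
  field_simp

end Catalan

theorem truncGain_succ_le {ℓ n : ℕ} {u : ℕ → ℝ → ℝ} {A : ℕ → ℝ} {c s : ℝ} (hs : 0 < s)
    (hA : ∀ k ∈ Finset.Icc (ℓ + 1) n, 0 ≤ A k) (hu₀ : ∀ k ∈ Finset.Icc (ℓ + 1) n, 0 ≤ u k s)
    (hu : ∀ k ∈ Finset.Icc (ℓ + 1) n, u k s ≤ A k / k * s ^ (((k : ℝ) - ℓ) / c - 1)) :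
    truncGain ℓ u (n + 1) s ≤ (∑ k ∈ Finset.Icc (ℓ + 1) n, A k * A (n - k + ℓ + 1)) *
      s ^ ((((n + 1 : ℕ) : ℝ) - ℓ) / c - 1 - 1) := by
  rw [truncGain, Nat.add_sub_cancel, Finset.sum_mul]
  refine Finset.sum_le_sum fun k hk => ?_
  have hk' := Finset.mem_Icc.1 hk
  set j := n - k + ℓ + 1 with hj
  have hjn : j ∈ Finset.Icc (ℓ + 1) n := Finset.mem_Icc.2 ⟨by omega, by omega⟩
  have hjc : (j : ℝ) = n + 1 + ℓ - k := by
    rw [hj, show n - k + ℓ + 1 = n + 1 + ℓ - k by omega, Nat.cast_sub (by omega)]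
    push_cast
    ring
  have hk0 : (0 : ℝ) < k := by exact_mod_cast (by omega : 0 < k)
  have hj0 : (0 : ℝ) < j := by exact_mod_cast (by omega : 0 < j)
  have hbk : 0 ≤ A k / k * s ^ (((k : ℝ) - ℓ) / c - 1) := by have := hA k hk; positivity
  rw [show n + 1 - k + ℓ = j by omega]
  calc (k : ℝ) * j * u k s * u j s = k * j * (u k s * u j s) := by ring
    _ ≤ k * j * ((A k / k * s ^ (((k : ℝ) - ℓ) / c - 1)) *
          (A j / j * s ^ (((j : ℝ) - ℓ) / c - 1))) :=
        mul_le_mul_of_nonneg_left (mul_le_mul (hu k hk) (hu j hjn) (hu₀ j hjn) hbk)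
          (by positivity)
    _ = A k * A j * (s ^ (((k : ℝ) - ℓ) / c - 1) * s ^ (((j : ℝ) - ℓ) / c - 1)) := by
        field_simp
    _ = A k * A j * s ^ ((((n + 1 : ℕ) : ℝ) - ℓ) / c - 1 - 1) := by
        rw [← Real.rpow_add hs, hjc]
        push_cast
        ring_nf

theorem le_of_hasDerivAt_le {f g f' g' : ℝ → ℝ} {a b : ℝ} (hf : ContinuousOn f (Icc a b))
    (hg : ContinuousOn g (Icc a b)) (hf' : ∀ x ∈ Ioo a b, HasDerivAt f (f' x) x)
    (hg' : ∀ x ∈ Ioo a b, HasDerivAt g (g' x) x) (hle : ∀ x ∈ Ioo a b, f' x ≤ g' x)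
    (ha : f a ≤ g a) {x : ℝ} (hx : x ∈ Icc a b) : f x ≤ g x := by
  have hmono : MonotoneOn (fun x => g x - f x) (Icc a b) := by
    refine monotoneOn_of_hasDerivWithinAt_nonneg (f' := fun x => g' x - f' x) (convex_Icc a b) (hg.sub hf) ?_ ?_ <;>
      rw [interior_Icc] <;> intro y hy
    · exact ((hg' y hy).sub (hf' y hy)).hasDerivWithinAt
    · exact sub_nonneg.2 (hle y hy)
  have := hmono (left_mem_Icc.2 (hx.1.trans hx.2)) hx hx.1
  simp only at this
  linarith

theorem le_mul_rpow_of_hasDerivAt_le {f f' : ℝ → ℝ} {T C p : ℝ} (hp : 0 < p)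
    (hf : ContinuousOn f (Icc 0 T)) (hf' : ∀ x ∈ Ioo 0 T, HasDerivAt f (f' x) x)
    (hle : ∀ x ∈ Ioo 0 T, f' x ≤ C * p * x ^ (p - 1)) (h0 : f 0 ≤ 0) {x : ℝ}
    (hx : x ∈ Icc 0 T) : f x ≤ C * x ^ p := by
  refine le_of_hasDerivAt_le (g := fun x => C * x ^ p) (g' := fun x => C * (p * x ^ (p - 1)))
    hf ?_ hf' (fun y hy => (Real.hasDerivAt_rpow_const (Or.inl hy.1.ne')).const_mul C)
    (fun y hy => (hle y hy).trans_eq (by ring)) ?_ hx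
  · exact continuousOn_const.mul (continuousOn_id.rpow_const fun _ _ => Or.inr hp.le)
  · simpa [Real.zero_rpow hp.ne'] using h0

namespace IsTruncSolution

variable {ℓ N : ℕ} {T : ℝ} {u0 : ℕ → ℝ} {u : ℕ → ℝ → ℝ} {S : Finset ℕ}

theorem continuousOn_sum (hu : IsTruncSolution ℓ N T u0 u) (hS : S ⊆ Finset.Icc (ℓ + 1) N) :
    ContinuousOn (fun t => ∑ n ∈ S, u n t) (Icc 0 T) :=
  continuousOn_finsetSum S fun n hn => (hu.contDiff n (hS hn)).continuousOn

theorem hasDerivAt (hu : IsTruncSolution ℓ N T u0 u) {n : ℕ} (hn : n ∈ Finset.Icc (ℓ + 1) N)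
    {t : ℝ} (ht : t ∈ Ioo 0 T) : HasDerivAt (u n) (truncRHS ℓ N u n t) t :=
  (hu.ode n hn t (Ioo_subset_Icc_self ht)).hasDerivAt (Icc_mem_nhds ht.1 ht.2)

theorem hasDerivAt_sum (hu : IsTruncSolution ℓ N T u0 u) (hS : S ⊆ Finset.Icc (ℓ + 1) N)
    {t : ℝ} (ht : t ∈ Ioo 0 T) :
    HasDerivAt (fun s => ∑ n ∈ S, u n s) (∑ n ∈ S, truncRHS ℓ N u n t) t :=
  HasDerivAt.fun_sum fun _ hn => hu.hasDerivAt (hS hn) ht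

theorem sum_init (hu : IsTruncSolution ℓ N T u0 u) (hS : S ⊆ Finset.Icc (ℓ + 1) N) :
    ∑ n ∈ S, u n 0 = ∑ n ∈ S, u0 n :=
  Finset.sum_congr rfl fun n hn => hu.init n (hS hn)

theorem sum_le_sum_init (hu : IsTruncSolution ℓ N T u0 u) (hN : ℓ + 1 ≤ N) {t : ℝ}
    (ht : t ∈ Icc 0 T) : ∑ n ∈ Finset.Icc (ℓ + 1) N, u n t ≤ ∑ n ∈ Finset.Icc (ℓ + 1) N, u0 n := by
  refine le_of_hasDerivAt_le (hu.continuousOn_sum subset_rfl) continuousOn_const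
    (fun s hs => hu.hasDerivAt_sum subset_rfl hs) (fun s _ => hasDerivAt_const s _)
    (fun s _ => ?_) (hu.sum_init subset_rfl).le ht
  rw [sum_truncRHS hN, neg_nonpos]
  rcases eq_or_ne (MNfun ℓ N u s) 0 with h | h <;> simp [h]

theorem sum_init_sub_le_sum (hu : IsTruncSolution ℓ N T u0 u) (hN : ℓ + 1 ≤ N) {t : ℝ}
    (ht : t ∈ Icc 0 T) :
    ∑ n ∈ Finset.Icc (ℓ + 1) N, u0 n - t ≤ ∑ n ∈ Finset.Icc (ℓ + 1) N, u n t := by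
  refine le_of_hasDerivAt_le (f := fun s => ∑ n ∈ Finset.Icc (ℓ + 1) N, u0 n - s)
    (continuousOn_const.sub continuousOn_id)
    (hu.continuousOn_sum subset_rfl) (fun s _ => (hasDerivAt_id s).const_sub _)
    (fun s hs => hu.hasDerivAt_sum subset_rfl hs) (fun s _ => ?_)
    (by rw [hu.sum_init subset_rfl, sub_zero]) ht
  rw [sum_truncRHS hN, neg_le_neg_iff]
  exact div_self_le_one _

theorem sum_le_sum_init_add (hu : IsTruncSolution ℓ N T u0 u)
    (hnonneg : ∀ n ∈ Finset.Icc (ℓ + 1) N, ∀ t ∈ Icc 0 T, 0 ≤ u n t)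
    (hS : S ⊆ Finset.Icc (ℓ + 1) N) {t : ℝ} (ht : t ∈ Icc 0 T) :
    ∑ n ∈ S, u n t ≤ ∑ n ∈ S, u0 n + t :=
  le_of_hasDerivAt_le (g := fun s => ∑ n ∈ S, u0 n + s) (hu.continuousOn_sum hS)
    (continuousOn_const.add continuousOn_id)
    (fun s hs => hu.hasDerivAt_sum hS hs) (fun s _ => (hasDerivAt_id s).const_add _)
    (fun s hs => sum_truncRHS_le_one (fun k hk => hnonneg k hk s (Ioo_subset_Icc_self hs)) hS)
    (by rw [hu.sum_init hS, add_zero]) ht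

theorem one_le_MNfun (hu : IsTruncSolution ℓ N T u0 u)
    (hnonneg : ∀ n ∈ Finset.Icc (ℓ + 1) N, ∀ t ∈ Icc 0 T, 0 ≤ u n t) {L : ℕ} (hℓL : ℓ ≤ L)
    (hLN : L < N) (hLN' : 2 * L ≤ N + ℓ) (hbdd : ∀ i, L < i → u0 i = 0)
    (hmass : ∑ n ∈ Finset.Icc (ℓ + 1) N, u0 n = 1) (hT : 2 * ((ℓ : ℝ) + 1) * T ≤ ℓ) {t : ℝ}
    (ht : t ∈ Icc 0 T) : 1 ≤ MNfun ℓ N u t := by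
  have hsplit : ∑ n ∈ Finset.Icc (ℓ + 1) L, u n t + ∑ n ∈ Finset.Icc (L + 1) N, u n t
      = ∑ n ∈ Finset.Icc (ℓ + 1) N, u n t := by
    simp only [Finset.Icc_add_one_left_eq_Ioc]
    exact Finset.sum_Ioc_consecutive _ hℓL hLN.le
  have hlarge : ∑ n ∈ Finset.Icc (L + 1) N, u n t ≤ t := by
    have := hu.sum_le_sum_init_add hnonneg (Finset.Icc_subset_Icc_left (show ℓ + 1 ≤ L + 1 by omega)) ht
    rwa [Finset.sum_eq_zero fun n hn => hbdd n (Finset.mem_Icc.1 hn).1, zero_add] at this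
  have htotal := hu.sum_init_sub_le_sum (by omega) ht
  rw [hmass] at htotal
  have hsmall : 1 ≤ ((ℓ : ℝ) + 1) * ∑ n ∈ Finset.Icc (ℓ + 1) L, u n t := by
    nlinarith [ht.2]
  have hmoment : ((ℓ : ℝ) + 1) * ∑ n ∈ Finset.Icc (ℓ + 1) L, u n t
      ≤ ∑ k ∈ Finset.Icc (ℓ + 1) L, (k : ℝ) * u k t := by
    rw [Finset.mul_sum]
    refine Finset.sum_le_sum fun k hk => ?_
    have hk' := Finset.mem_Icc.1 hk
    exact mul_le_mul_of_nonneg_right (by exact_mod_cast hk'.1)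
      (hnonneg k (Finset.mem_Icc.2 ⟨hk'.1, by omega⟩) t ht)
  calc 1 ≤ (∑ k ∈ Finset.Icc (ℓ + 1) L, (k : ℝ) * u k t) ^ 2 :=
        one_le_pow₀ (hsmall.trans hmoment)
    _ ≤ MNfun ℓ N u t := sq_sum_le_MNfun (fun k hk => hnonneg k hk t ht) hLN hLN'

theorem le_mul_rpow (hu : IsTruncSolution ℓ N T u0 u)
    (hnonneg : ∀ n ∈ Finset.Icc (ℓ + 1) N, ∀ t ∈ Icc 0 T, 0 ≤ u n t)
    (hM : ∀ t ∈ Icc 0 T, 1 ≤ MNfun ℓ N u t) {n : ℕ} (hn : n ∈ Finset.Icc (ℓ + 1) N)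
    (hinit : u0 n = 0) {C p : ℝ} (hp : 0 < p)
    (hgain : ∀ t ∈ Ioo 0 T, truncGain ℓ u n t ≤ C * p * t ^ (p - 1)) {t : ℝ}
    (ht : t ∈ Icc 0 T) : u n t ≤ C * t ^ p := by
  refine le_mul_rpow_of_hasDerivAt_le hp (hu.contDiff n hn).continuousOn
    (fun s hs => hu.hasDerivAt hn hs) (fun s hs => ?_) (by rw [hu.init n hn, hinit]) ht
  have hs' := Ioo_subset_Icc_self hs
  have hnonneg_s : ∀ k ∈ Finset.Icc (ℓ + 1) N, 0 ≤ u k s := fun k hk => hnonneg k hk s hs'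
  calc truncRHS ℓ N u n s ≤ truncGain ℓ u n s / MNfun ℓ N u s :=
        truncRHS_le_truncGain_div hnonneg_s hn
    _ ≤ truncGain ℓ u n s :=
        div_le_self (truncGain_nonneg hnonneg_s (Finset.mem_Icc.1 hn).2) (hM s hs')
    _ ≤ C * p * s ^ (p - 1) := hgain s hs

theorem le_catalan_mul_rpow (hu : IsTruncSolution ℓ N T u0 u)
    (hnonneg : ∀ n ∈ Finset.Icc (ℓ + 1) N, ∀ t ∈ Icc 0 T, 0 ≤ u n t)
    (hM : ∀ t ∈ Icc 0 T, 1 ≤ MNfun ℓ N u t)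
    (hle : ∀ n ∈ Finset.Icc (ℓ + 1) N, ∀ t ∈ Icc 0 T, u n t ≤ 1) (hT : T ≤ 1) {L : ℕ}
    (hL : 0 < L) (hinit : ∀ n, 2 * L + ℓ < n → u0 n = 0) {A : ℕ → ℝ}
    (hA₁ : ∀ k : ℕ, ℓ + 1 ≤ k → k ≤ 2 * L + ℓ → A k = k)
    (hA₂ : ∀ n : ℕ, 2 * L + ℓ ≤ n →
      A (n + 1) = ((n : ℝ) + 1) * (2 * (L : ℝ) / ((n : ℝ) + 1 - ℓ - 2 * L)) *
        ∑ k ∈ Finset.Icc (ℓ + 1) n, A k * A (n - k + ℓ + 1)) :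
    ∀ i ∈ Finset.Icc (ℓ + 1) N, ∀ t ∈ Ioc 0 T,
      u i t ≤ A i / i * t ^ (((i : ℝ) - ℓ) / (2 * L) - 1) := by
  intro i
  induction i using Nat.strong_induction_on with
  | _ i ih =>
    intro hi t ht
    have hi' := Finset.mem_Icc.1 hi
    by_cases hbase : i ≤ 2 * L + ℓ
    · have hexp : ((i : ℝ) - ℓ) / (2 * L) - 1 ≤ 0 := by
        have : (i : ℝ) ≤ 2 * L + ℓ := by exact_mod_cast hbase
        rw [sub_nonpos, div_le_one (by positivity)]
        linarith
      rw [hA₁ i hi'.1 hbase, div_self (Nat.cast_ne_zero.2 (by omega)), one_mul]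
      exact (hle i hi t (Ioc_subset_Icc_self ht)).trans
        (Real.one_le_rpow_of_pos_of_le_one_of_nonpos ht.1 (ht.2.trans hT) hexp)
    obtain ⟨n, rfl⟩ : ∃ n, i = n + 1 := ⟨i - 1, by omega⟩
    have hn : 2 * L + ℓ ≤ n := by omega
    have hp : 0 < (((n + 1 : ℕ) : ℝ) - ℓ) / (2 * L) - 1 := by
      have : (2 * L + ℓ : ℝ) + 1 ≤ ((n + 1 : ℕ) : ℝ) := by exact_mod_cast (by omega : _ ≤ n + 1)
      rw [sub_pos, one_lt_div (by positivity)]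
      linarith
    refine hu.le_mul_rpow hnonneg hM hi (hinit _ (by omega)) hp (fun s hs => ?_)
      (Ioc_subset_Icc_self ht)
    rw [catalan_div_mul_exponent hL hn (hA₂ n hn)]
    have hsmall : ∀ k ∈ Finset.Icc (ℓ + 1) n, k ∈ Finset.Icc (ℓ + 1) N := fun k hk =>
      Finset.mem_Icc.2 ⟨(Finset.mem_Icc.1 hk).1, by have := Finset.mem_Icc.1 hk; omega⟩
    exact truncGain_succ_le hs.1 (fun k hk => catalan_nonneg hA₁ hA₂ k (Finset.mem_Icc.1 hk).1)
      (fun k hk => hnonneg k (hsmall k hk) s (Ioo_subset_Icc_self hs))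
      (fun k hk => ih k (by have := Finset.mem_Icc.1 hk; omega) (hsmall k hk) s
        ⟨hs.1, hs.2.le⟩)

end IsTruncSolution

theorem truncated_system_monomial_bound_general (ℓ L N : ℕ)
    (hL : ℓ + 1 ≤ L) (hN : 2 * L + ℓ ≤ N) (u0 : ℕ → ℝ)
    (hbdd : ∀ i, L < i → u0 i = 0)
    (hsum : ∑ i ∈ Finset.Icc (ℓ + 1) L, u0 i = 1)
    (u : ℕ → ℝ → ℝ) (hu : IsTruncSolution ℓ N (ℓ / (2 * (ℓ + 1)) : ℝ) u0 u)
    (hnonneg : ∀ n ∈ Finset.Icc (ℓ + 1) N,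
      ∀ t ∈ Set.Icc (0 : ℝ) (ℓ / (2 * (ℓ + 1)) : ℝ), 0 ≤ u n t)
    (A : ℕ → ℝ)
    (hA₁ : ∀ k : ℕ, ℓ + 1 ≤ k → k ≤ 2 * L + ℓ → A k = k)
    (hA₂ : ∀ n : ℕ, 2 * L + ℓ ≤ n →
      A (n + 1) = ((n : ℝ) + 1) * (2 * (L : ℝ) / ((n : ℝ) + 1 - ℓ - 2 * L)) *
        ∑ k ∈ Finset.Icc (ℓ + 1) n, A k * A (n - k + ℓ + 1)) :
    ∀ i : ℕ, 2 * L + ℓ ≤ i → i ≤ N →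
      ∀ t ∈ Set.Ioc (0 : ℝ) (ℓ / (2 * (ℓ + 1)) : ℝ),
        u i t ≤ (A i / i) * t ^ (((i : ℝ) - ℓ) / (2 * L) - 1) := by
  intro i hi hiN t ht
  have hT : 2 * ((ℓ : ℝ) + 1) * (ℓ / (2 * (ℓ + 1))) ≤ ℓ := by field_simp; rfl
  have hT₁ : (ℓ / (2 * (ℓ + 1)) : ℝ) ≤ 1 := by rw [div_le_one (by positivity)]; linarith
  have hmass : ∑ n ∈ Finset.Icc (ℓ + 1) N, u0 n = 1 := by
    rw [← hsum, eq_comm]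
    refine Finset.sum_subset (Finset.Icc_subset_Icc_right (by omega)) fun n hn hn' => hbdd n ?_
    simp only [Finset.mem_Icc] at hn hn'
    omega
  have hM : ∀ t ∈ Set.Icc (0 : ℝ) (ℓ / (2 * (ℓ + 1))), 1 ≤ MNfun ℓ N u t :=
    fun t ht => hu.one_le_MNfun hnonneg (by omega) (by omega) (by omega) hbdd hmass hT ht
  have hle : ∀ n ∈ Finset.Icc (ℓ + 1) N, ∀ t ∈ Set.Icc (0 : ℝ) (ℓ / (2 * (ℓ + 1))), u n t ≤ 1 :=
    fun n hn t ht => (Finset.single_le_sum (fun k hk => hnonneg k hk t ht) hn).trans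
      ((hu.sum_le_sum_init (by omega) ht).trans hmass.le)
  exact hu.le_catalan_mul_rpow hnonneg hM hle hT₁ (by omega) (fun n hn => hbdd n (by omega))
    hA₁ hA₂ i (Finset.mem_Icc.2 ⟨by omega, hiN⟩) t ht

/-- monomial growth bounds for the truncated system.  Let `ℓ ≥ 1`,
`L ≥ ℓ+1`, `N ≥ 2L+ℓ`, let `u` be the unique nonnegative solution of the
truncated system with bounded large initial data on `[0,T₁]`,
`T₁ = ℓ/(2(ℓ+1))`, and let `A` be the Catalan-like sequence associated with `L`
and `ℓ`, i.e. `A_k = k` for `ℓ+1 ≤ k ≤ 2L+ℓ` and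
`A_{n+1} = (n+1) (2L/(n+1−ℓ−2L)) ∑_{k=ℓ+1}^{n} A_k A_{n−k+ℓ+1}` for `n ≥ 2L+ℓ`.
Then `u_i(t) ≤ (A_i/i) t^{(i−ℓ)/(2L)−1}` for all `2L+ℓ ≤ i ≤ N` and
`t ∈ (0,T₁]`. -/
theorem truncated_system_monomial_bound (ℓ L N : ℕ) (hℓ : 1 ≤ ℓ)
    (hL : ℓ + 1 ≤ L) (hN : 2 * L + ℓ ≤ N) (u0 : ℕ → ℝ) (h0 : ∀ i, 0 ≤ u0 i)
    (hbdd : ∀ i, L < i → u0 i = 0)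
    (hsum : ∑ i ∈ Finset.Icc (ℓ + 1) L, u0 i = 1)
    (u : ℕ → ℝ → ℝ) (hu : IsTruncSolution ℓ N (ℓ / (2 * (ℓ + 1)) : ℝ) u0 u)
    (hnonneg : ∀ n ∈ Finset.Icc (ℓ + 1) N,
      ∀ t ∈ Set.Icc (0 : ℝ) (ℓ / (2 * (ℓ + 1)) : ℝ), 0 ≤ u n t)
    (A : ℕ → ℝ)
    (hA₁ : ∀ k : ℕ, ℓ + 1 ≤ k → k ≤ 2 * L + ℓ → A k = k)
    (hA₂ : ∀ n : ℕ, 2 * L + ℓ ≤ n →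
      A (n + 1) = ((n : ℝ) + 1) * (2 * (L : ℝ) / ((n : ℝ) + 1 - ℓ - 2 * L)) *
        ∑ k ∈ Finset.Icc (ℓ + 1) n, A k * A (n - k + ℓ + 1)) :
    ∀ i : ℕ, 2 * L + ℓ ≤ i → i ≤ N →
      ∀ t ∈ Set.Ioc (0 : ℝ) (ℓ / (2 * (ℓ + 1)) : ℝ),
        u i t ≤ (A i / i) * t ^ (((i : ℝ) - ℓ) / (2 * L) - 1) :=
  truncated_system_monomial_bound_general ℓ L N hL hN u0 hbdd hsum u hu hnonneg A hA₁ hA₂
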